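/- arXiv:0903.3117 — 2 statements merged into one kernel-verified Lean document; each statement's English description precedes it below -/
import Mathlib

section
/- Assume the Ornstein-Uhlenbeck hypotheses: Q, B : ℝ → ℝ^{N×N} with entries q_{ij} ∈ C_b^1(ℝ), b_{ij} ∈ C_b(ℝ), Q(s) symmetric with ⟨Q(s)ξ, ξ⟩ ≥ η₀|ξ|² for some η₀ > 0, and the evolution matrices U(s,r) (solving D_s U(s,r) = B(s)U(s,r), U(r,r) = I) satisfy ‖U(r,s)‖ ≤ C₀ e^{-ω(s-r)} for all s ≥ r and some C₀, ω > 0. Let Q_s = ∫_s^{+∞} U(s,ξ) Q(ξ) U(s,ξ)* dξ. Then the map s ↦ Q_s is differentiable and satisfies the Lyapunov equation D_s Q_s = −Q(s) + B(s) Q_s + Q_s B(s)*; consequently, the function Φ(s,x) = ½⟨Q_s^{-1}x, x⟩ satisfies D_s Φ(s,x) = ½⟨Q(s) Q_s^{-1} x, Q_s^{-1} x⟩ − ⟨Q_s^{-1} B(s) x, x⟩ for all (s,x) ∈ ℝ^{1+N}. -/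
/-!
Put `V t = U(t,0)` and `W ξ = U(0,ξ)`. Uniqueness for the linear ODE `X' = B X` gives the
cocycle law `U(t,ξ) = V t * W ξ`, in particular `V t * W t = 1`. Hence
`Q_t = V t * G t * (V t)ᵀ` with `G t = ∫_t^∞ W Q Wᵀ`, where the integrand decays like
`e^{-2ωξ}`. Then `G' = -W Q Wᵀ`, and the product rule turns `V' = B V` into the Lyapunov
equation. `G t` is an integral of positive definite matrices, so `Q_t` is positive definite;
the derivative of `Φ` follows from `(Q_t⁻¹)' = -Q_t⁻¹ Q_t' Q_t⁻¹`.
-/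

noncomputable section
open MeasureTheory Real Set Filter ENNReal NNReal Matrix

/-- The Euclidean norm of a vector in `ℝ^N`. -/
def enorm2 {N : ℕ} (x : Fin N → ℝ) : ℝ := Real.sqrt (∑ i, x i ^ 2)

/-- The operator norm of a matrix with respect to the Euclidean norm. -/
def opNorm {N : ℕ} (A : Matrix (Fin N) (Fin N) ℝ) : ℝ :=
  ‖Matrix.toEuclideanCLM (𝕜 := ℝ) A‖

-- With the operator norm, `opNorm A = ‖A‖` by definition; its topology is the product one, so
-- entrywise and matrix-valued derivatives are interchangeable (`hasDerivAt_matrix_iff`).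
open scoped Matrix.Norms.L2Operator

theorem HasDerivAt.ringInverse {𝔸 : Type*} [NormedRing 𝔸] [NormedAlgebra ℝ 𝔸]
    [HasSummableGeomSeries 𝔸] {A : ℝ → 𝔸} {A' : 𝔸} {t : ℝ} (hA : HasDerivAt A A' t)
    (h : IsUnit (A t)) :
    HasDerivAt (fun s => Ring.inverse (A s))
      (-(Ring.inverse (A t) * A' * Ring.inverse (A t))) t := by
  obtain ⟨u, hu⟩ := h
  have hinv : HasFDerivAt Ring.inverse _ (A t) := hu ▸ hasFDerivAt_ringInverse (𝕜 := ℝ) u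
  rw [← hu, Ring.inverse_unit]
  exact hinv.comp_hasDerivAt t hA

theorem eq_of_hasDerivAt_mul_left {𝔸 : Type*} [NormedRing 𝔸] [NormedAlgebra ℝ 𝔸]
    {B f g : ℝ → 𝔸} {K : ℝ} (hB : ∀ t, ‖B t‖ ≤ K)
    (hf : ∀ t, HasDerivAt f (B t * f t) t) (hg : ∀ t, HasDerivAt g (B t * g t) t)
    {t₀ : ℝ} (h : f t₀ = g t₀) : f = g := by
  have hlip : ∀ t, LipschitzOnWith K.toNNReal (fun x => B t * x) univ := fun t =>
    LipschitzWith.lipschitzOnWith <| LipschitzWith.of_dist_le_mul fun x y => by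
      rw [dist_eq_norm, dist_eq_norm, ← mul_sub]
      exact (norm_mul_le _ _).trans <|
        mul_le_mul_of_nonneg_right ((hB t).trans K.le_coe_toNNReal) (norm_nonneg _)
  exact ODE_solution_unique_univ hlip (fun t => ⟨hf t, trivial⟩) (fun t => ⟨hg t, trivial⟩) h

theorem integrableOn_Ioi_of_norm_le_exp {E : Type*} [NormedAddCommGroup E] {φ : ℝ → E}
    (hφ : Continuous φ) {c b : ℝ} (hb : 0 < b)
    (h : ∀ ξ, 0 ≤ ξ → ‖φ ξ‖ ≤ c * Real.exp (-b * ξ)) (a : ℝ) : IntegrableOn φ (Ioi a) := by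
  rw [← Ioc_union_Ioi_eq_Ioi (le_max_left a 0)]
  refine hφ.integrableOn_Ioc.union <|
    ((exp_neg_integrableOn_Ioi _ hb).const_mul c).mono' hφ.aestronglyMeasurable.restrict ?_
  filter_upwards [self_mem_ae_restrict measurableSet_Ioi] with ξ hξ
  exact h ξ ((le_max_right a 0).trans hξ.le)

theorem hasDerivAt_setIntegral_Ioi {E : Type*} [NormedAddCommGroup E] [NormedSpace ℝ E]
    [CompleteSpace E] {φ : ℝ → E} (hφ : Continuous φ) (hint : ∀ a, IntegrableOn φ (Ioi a))
    (s : ℝ) : HasDerivAt (fun t => ∫ ξ in Ioi t, φ ξ) (-φ s) s := by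
  have hsplit : ∀ t, s - 1 < t →
      ∫ ξ in Ioi t, φ ξ = (∫ ξ in Ioi (s - 1), φ ξ) - ∫ ξ in (s - 1)..t, φ ξ := by
    intro t ht
    rw [intervalIntegral.integral_of_le ht.le, ← Ioc_union_Ioi_eq_Ioi ht.le,
      setIntegral_union Ioc_disjoint_Ioi_same measurableSet_Ioi hφ.integrableOn_Ioc (hint t)]
    abel
  have hFTC := (intervalIntegral.integral_hasDerivAt_right (hφ.intervalIntegrable (s - 1) s)
    hφ.stronglyMeasurable.stronglyMeasurableAtFilter hφ.continuousAt).const_sub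
    (∫ ξ in Ioi (s - 1), φ ξ)
  refine hFTC.congr_of_eventuallyEq ?_
  filter_upwards [Ioi_mem_nhds (sub_one_lt s)] with t ht using hsplit t ht

section Evolution

variable {𝔸 : Type*} [NormedRing 𝔸] [NormedAlgebra ℝ 𝔸] {U : ℝ → ℝ → 𝔸} {B : ℝ → 𝔸} {K : ℝ}

theorem evolution_mul_evolution (hB : ∀ t, ‖B t‖ ≤ K)
    (hU : ∀ r t, HasDerivAt (fun t => U t r) (B t * U t r) t) (hU0 : ∀ r, U r r = 1)
    (t r ξ : ℝ) : U t r * U r ξ = U t ξ := by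
  refine congrFun (eq_of_hasDerivAt_mul_left (f := fun t => U t r * U r ξ) hB (fun t => ?_) (hU ξ)
    (t₀ := r) ?_) t
  · simpa only [mul_assoc] using (hU r t).mul_const (U r ξ)
  · simp [hU0]

end Evolution

section Matrices

variable {m n : Type*} [Fintype n]

theorem hasDerivAt_matrix_iff {f : ℝ → Matrix m n ℝ} {f' : Matrix m n ℝ} {t : ℝ} :
    HasDerivAt f f' t ↔ ∀ i j, HasDerivAt (fun s => f s i j) (f' i j) t :=
  hasDerivAt_pi.trans (forall_congr' fun _ => hasDerivAt_pi)

theorem HasDerivAt.matrix_transpose [Fintype m] {f : ℝ → Matrix m n ℝ} {f' : Matrix m n ℝ} {t : ℝ}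
    (h : HasDerivAt f f' t) : HasDerivAt (fun s => (f s)ᵀ) f'ᵀ t :=
  hasDerivAt_matrix_iff.mpr fun i j => hasDerivAt_matrix_iff.mp h j i

def quadFormCLM (x : n → ℝ) : Matrix n n ℝ →L[ℝ] ℝ :=
  LinearMap.toContinuousLinearMap (E := Matrix n n ℝ)
    { toFun := fun M => (M *ᵥ x) ⬝ᵥ x
      map_add' := fun M M' => by simp only [add_mulVec, add_dotProduct]
      map_smul' := fun c M => by simp [smul_mulVec] }

theorem quadFormCLM_apply (x : n → ℝ) (M : Matrix n n ℝ) :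
    quadFormCLM x M = (M *ᵥ x) ⬝ᵥ x := rfl

variable [DecidableEq n]

theorem exists_norm_le_of_abs_apply_le {ι : Type*} {A : ι → Matrix n n ℝ}
    (h : ∃ C, ∀ t i j, |A t i j| ≤ C) : ∃ K, ∀ t, ‖A t‖ ≤ K := by
  obtain ⟨C, hC⟩ := h
  let box : Set (Matrix n n ℝ) := univ.pi fun _ => univ.pi fun _ => Icc (-C) C
  have hbox : IsCompact box := isCompact_univ_pi fun _ => isCompact_univ_pi fun _ => isCompact_Icc
  obtain ⟨K, hK⟩ := isBounded_iff_forall_norm_le.mp hbox.isBounded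
  exact ⟨K, fun t => hK _ fun i _ j _ => abs_le.mp (hC t i j)⟩

theorem l2_opNorm_transpose (A : Matrix n n ℝ) : ‖Aᵀ‖ = ‖A‖ := by
  rw [← conjTranspose_eq_transpose_of_trivial, l2_opNorm_conjTranspose]

theorem posDef_mul_mul_transpose_iff {A V : Matrix n n ℝ} (hV : IsUnit V) :
    (V * A * Vᵀ).PosDef ↔ A.PosDef := by
  simpa [star_eq_conjTranspose] using Matrix.IsUnit.posDef_star_right_conjugate_iff (x := A) hV

variable {X : Type*} [MeasurableSpace X] {μ : Measure X}

theorem integral_matrix_apply {F : X → Matrix n n ℝ} (hF : Integrable F μ) (i j : n) :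
    (∫ x, F x ∂μ) i j = ∫ x, F x i j ∂μ :=
  ((LinearMap.toContinuousLinearMap (entryLinearMap ℝ ℝ i j)).integral_comp_comm hF).symm

theorem Matrix.PosDef.integral {F : X → Matrix n n ℝ} (hF : Integrable F μ)
    (hpos : ∀ x, (F x).PosDef) (hμ : μ ≠ 0) : (∫ x, F x ∂μ).PosDef := by
  refine .of_dotProduct_mulVec_pos (.ext fun i j => ?_) fun v hv => ?_
  · simpa [integral_matrix_apply hF] using
      integral_congr_ae (ae_of_all μ fun x => (hpos x).isHermitian.apply i j)
  · have hq : ∀ x, 0 < quadFormCLM v (F x) := fun x => by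
      simpa [quadFormCLM_apply, dotProduct_comm] using (hpos x).dotProduct_mulVec_pos hv
    have hint := (quadFormCLM v).integrable_comp hF
    rw [star_trivial, dotProduct_comm, ← quadFormCLM_apply,
      ← (quadFormCLM v).integral_comp_comm hF,
      integral_pos_iff_support_of_nonneg (fun x => (hq x).le) hint]
    simpa [Function.support, (hq _).ne'] using Measure.measure_univ_pos.mpr hμ

theorem integral_mul_mul_transpose_apply {F : X → Matrix n n ℝ} (hF : Integrable F μ)
    (A : Matrix n n ℝ) (i j : n) :
    ∫ x, (A * F x * Aᵀ) i j ∂μ = (A * (∫ x, F x ∂μ) * Aᵀ) i j := by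
  let L := ContinuousLinearMap.mulLeftRight ℝ (Matrix n n ℝ) A Aᵀ
  have h := congrFun₂ (L.integral_comp_comm hF) i j
  rw [integral_matrix_apply (L.integrable_comp hF)] at h
  exact h

theorem continuous_of_mul_eq_one {V W : ℝ → Matrix n n ℝ} (hV : Continuous V)
    (hVW : ∀ t, V t * W t = 1) : Continuous W := by
  have hW : W = fun t => Ring.inverse (V t) := funext fun t => by
    rw [← nonsing_inv_eq_ringInverse, inv_eq_right_inv (hVW t)]
  refine hW ▸ continuous_iff_continuousAt.2 fun t => ?_
  obtain ⟨u, hu⟩ := IsUnit.of_mul_eq_one _ (hVW t)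
  exact (hu ▸ NormedRing.inverse_continuousAt u).comp hV.continuousAt

end Matrices

section Lyapunov

variable {n : Type*} [Fintype n] [DecidableEq n]

theorem integrableOn_Ioi_mul_mul_transpose {W Q : ℝ → Matrix n n ℝ} {KQ C₀ ω : ℝ}
    (hW : Continuous W) (hQ : Continuous Q) (hQb : ∀ t, ‖Q t‖ ≤ KQ) (hω : 0 < ω)
    (hWdecay : ∀ ξ, 0 ≤ ξ → ‖W ξ‖ ≤ C₀ * Real.exp (-ω * ξ)) (a : ℝ) :
    IntegrableOn (fun ξ => W ξ * Q ξ * (W ξ)ᵀ) (Ioi a) := by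
  refine integrableOn_Ioi_of_norm_le_exp (by fun_prop) (mul_pos two_pos hω)
    (c := C₀ ^ 2 * KQ) (fun ξ hξ => ?_) a
  calc ‖W ξ * Q ξ * (W ξ)ᵀ‖ ≤ ‖W ξ‖ ^ 2 * ‖Q ξ‖ :=
        norm_mul₃_le.trans_eq (by rw [l2_opNorm_transpose]; ring)
    _ ≤ (C₀ * Real.exp (-ω * ξ)) ^ 2 * KQ :=
        mul_le_mul (pow_le_pow_left₀ (norm_nonneg _) (hWdecay ξ hξ) 2) (hQb ξ) (norm_nonneg _)
          (sq_nonneg _)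
    _ = C₀ ^ 2 * KQ * Real.exp (-(2 * ω) * ξ) := by
        rw [mul_pow, ← Real.exp_nat_mul]; ring_nf

theorem hasDerivAt_mul_tailIntegral_mul_transpose {P V W Q B : ℝ → Matrix n n ℝ}
    (hV : ∀ t, HasDerivAt V (B t * V t) t) (hVW : ∀ t, V t * W t = 1)
    (hg : Continuous fun ξ => W ξ * Q ξ * (W ξ)ᵀ)
    (hint : ∀ a, IntegrableOn (fun ξ => W ξ * Q ξ * (W ξ)ᵀ) (Ioi a))
    (hP : ∀ t, P t = V t * (∫ ξ in Ioi t, W ξ * Q ξ * (W ξ)ᵀ) * (V t)ᵀ) (s : ℝ) :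
    HasDerivAt P (-Q s + B s * P s + P s * (B s)ᵀ) s := by
  have hVgV : V s * (W s * Q s * (W s)ᵀ) * (V s)ᵀ = Q s := by
    calc _ = (V s * W s) * Q s * (V s * W s)ᵀ := by simp only [transpose_mul, mul_assoc]
      _ = Q s := by simp [hVW s]
  rw [funext hP]
  refine (((hV s).mul (hasDerivAt_setIntegral_Ioi hg hint s)).mul
    (hV s).matrix_transpose).congr_deriv ?_
  conv_rhs => rw [← hVgV]
  simp only [Pi.mul_apply, transpose_mul, add_mul, mul_neg, neg_mul, mul_assoc]
  abel

theorem hasDerivAt_half_quadForm_inv_of_lyapunov {P Q B : ℝ → Matrix n n ℝ} {s : ℝ}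
    (hP : HasDerivAt P (-Q s + B s * P s + P s * (B s)ᵀ) s) (hsym : (P s)ᵀ = P s)
    (hunit : IsUnit (P s)) (x : n → ℝ) :
    HasDerivAt (fun t => (1 / 2) * (((P t)⁻¹ *ᵥ x) ⬝ᵥ x))
      ((1 / 2) * ((Q s *ᵥ ((P s)⁻¹ *ᵥ x)) ⬝ᵥ ((P s)⁻¹ *ᵥ x))
        - (((P s)⁻¹ * B s) *ᵥ x) ⬝ᵥ x) s := by
  set R := (P s)⁻¹
  have hdet : IsUnit (P s).det := (isUnit_iff_isUnit_det _).mp hunit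
  have hinv : HasDerivAt (fun t => (P t)⁻¹)
      (-(R * (-Q s + B s * P s + P s * (B s)ᵀ) * R)) s := by
    simp only [R, nonsing_inv_eq_ringInverse]
    exact hP.ringInverse hunit
  have hPR : P s * R = 1 := mul_nonsing_inv _ hdet
  have hRP : R * P s = 1 := nonsing_inv_mul _ hdet
  have hinv_deriv : -(R * (-Q s + B s * P s + P s * (B s)ᵀ) * R)
      = R * Q s * R - R * B s - (B s)ᵀ * R := by
    simp only [mul_add, add_mul, mul_neg, neg_mul, mul_assoc, hPR, mul_one]
    simp only [← mul_assoc, hRP, one_mul]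
    abel
  have hRsym : Rᵀ = R := by rw [transpose_nonsing_inv, hsym]
  refine (((quadFormCLM x).hasFDerivAt.comp_hasDerivAt s hinv).const_mul (1 / 2)).congr_deriv ?_
  have hRQR : ((R * Q s * R) *ᵥ x) ⬝ᵥ x = (Q s *ᵥ (R *ᵥ x)) ⬝ᵥ (R *ᵥ x) := by
    rw [← mulVec_mulVec, ← mulVec_mulVec, dotProduct_comm, ← dotProduct_transpose_mulVec, hRsym]
  have hBR : (((B s)ᵀ * R) *ᵥ x) ⬝ᵥ x = ((R * B s) *ᵥ x) ⬝ᵥ x := by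
    rw [dotProduct_comm, ← dotProduct_transpose_mulVec, transpose_mul, transpose_transpose, hRsym,
      dotProduct_comm]
  rw [quadFormCLM_apply, hinv_deriv, sub_mulVec, sub_mulVec, sub_dotProduct, sub_dotProduct,
    hRQR, hBR]
  ring

theorem posDef_mul_tailIntegral_mul_transpose {V W Q : ℝ → Matrix n n ℝ} {s : ℝ}
    (hVW : ∀ t, V t * W t = 1) (hQ : ∀ ξ, (Q ξ).PosDef)
    (hint : IntegrableOn (fun ξ => W ξ * Q ξ * (W ξ)ᵀ) (Ioi s)) :
    (V s * (∫ ξ in Ioi s, W ξ * Q ξ * (W ξ)ᵀ) * (V s)ᵀ).PosDef := by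
  rw [posDef_mul_mul_transpose_iff (IsUnit.of_mul_eq_one _ (hVW s))]
  refine .integral hint (fun ξ => ?_) (by simp [Measure.restrict_eq_zero])
  exact (posDef_mul_mul_transpose_iff (IsUnit.of_mul_eq_one_right _ (hVW ξ))).mpr (hQ ξ)

end Lyapunov

theorem posDef_of_coercive {N : ℕ} {A : Matrix (Fin N) (Fin N) ℝ} {η₀ : ℝ} (hη₀ : 0 < η₀)
    (hsym : Aᵀ = A) (h : ∀ ξ, η₀ * enorm2 ξ ^ 2 ≤ ∑ i, A.mulVec ξ i * ξ i) : A.PosDef := by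
  refine .of_dotProduct_mulVec_pos (by rwa [IsHermitian, conjTranspose_eq_transpose_of_trivial])
    fun x hx => ?_
  obtain ⟨i, hi⟩ := Function.ne_iff.mp hx
  have hnorm : 0 < enorm2 x :=
    Real.sqrt_pos.mpr <|
      Finset.sum_pos' (fun _ _ => sq_nonneg _) ⟨i, Finset.mem_univ i, sq_pos_iff.mpr hi⟩
  rw [star_trivial, dotProduct_comm]
  exact (by positivity : 0 < η₀ * enorm2 x ^ 2).trans_le (h x)

theorem statement1_general (N : ℕ)
    (Q B : ℝ → Matrix (Fin N) (Fin N) ℝ)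
    (hQreg : ∀ i j, ContDiff ℝ 1 fun s => Q s i j)
    (hQbd : ∃ C : ℝ, ∀ (s : ℝ) (i j : Fin N),
      |Q s i j| ≤ C ∧ |deriv (fun t => Q t i j) s| ≤ C)
    (hBbd : ∃ C : ℝ, ∀ (s : ℝ) (i j : Fin N), |B s i j| ≤ C)
    (hQsym : ∀ s, (Q s)ᵀ = Q s)
    (η₀ : ℝ) (hη₀ : 0 < η₀)
    (hQell : ∀ (s : ℝ) (ξ : Fin N → ℝ),
      η₀ * enorm2 ξ ^ 2 ≤ ∑ i, (Q s).mulVec ξ i * ξ i)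
    (U : ℝ → ℝ → Matrix (Fin N) (Fin N) ℝ)
    (hU0 : ∀ r, U r r = 1)
    (hUderiv : ∀ (r s : ℝ) (i j : Fin N),
      HasDerivAt (fun t => U t r i j) ((B s * U s r) i j) s)
    (C₀ ω : ℝ) (hω : 0 < ω)
    (hdecay : ∀ r s : ℝ, r ≤ s → opNorm (U r s) ≤ C₀ * Real.exp (-ω * (s - r)))
    (Qs : ℝ → Matrix (Fin N) (Fin N) ℝ)
    (hQs : ∀ (s : ℝ) (i j : Fin N),
      Qs s i j = ∫ ξ in Set.Ioi s, (U s ξ * Q ξ * (U s ξ)ᵀ) i j)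
    :
    (∀ (s : ℝ) (i j : Fin N),
      HasDerivAt (fun t => Qs t i j) ((-(Q s) + B s * Qs s + Qs s * (B s)ᵀ) i j) s) ∧
    (∀ (s : ℝ) (x : Fin N → ℝ),
      HasDerivAt (fun t => (1 / 2) * ∑ i, (Qs t)⁻¹.mulVec x i * x i)
        ((1 / 2) * (∑ i, (Q s).mulVec ((Qs s)⁻¹.mulVec x) i * ((Qs s)⁻¹.mulVec x) i)
          - ∑ i, ((Qs s)⁻¹ * B s).mulVec x i * x i) s) := by
  obtain ⟨KB, hKB⟩ := exists_norm_le_of_abs_apply_le hBbd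
  obtain ⟨KQ, hKQ⟩ := exists_norm_le_of_abs_apply_le (hQbd.imp fun _ h t i j => (h t i j).1)
  have hU : ∀ r t, HasDerivAt (fun t => U t r) (B t * U t r) t := fun r t =>
    hasDerivAt_matrix_iff.mpr (hUderiv r t)
  have hevol := evolution_mul_evolution hKB hU hU0
  set V := fun t => U t 0
  set W := fun ξ => U 0 ξ
  have hVW : ∀ t, V t * W t = 1 := fun t => (hevol t 0 t).trans (hU0 t)
  have hV : Continuous V := continuous_iff_continuousAt.mpr fun t => (hU 0 t).continuousAt
  have hW : Continuous W := continuous_of_mul_eq_one hV hVW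
  have hQ : Continuous Q := continuous_matrix fun i j => (hQreg i j).continuous
  have hint : ∀ a, IntegrableOn (fun ξ => W ξ * Q ξ * (W ξ)ᵀ) (Ioi a) :=
    integrableOn_Ioi_mul_mul_transpose hW hQ hKQ hω
      (fun ξ hξ => (hdecay 0 ξ hξ).trans_eq (by rw [sub_zero]))
  have hrep : ∀ t, Qs t = V t * (∫ ξ in Ioi t, W ξ * Q ξ * (W ξ)ᵀ) * (V t)ᵀ := fun t => by
    ext i j
    rw [hQs, ← integral_mul_mul_transpose_apply (hint t)]
    refine integral_congr_ae (ae_of_all _ fun ξ => ?_)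
    simp only [V, W, ← hevol t 0 ξ, transpose_mul, mul_assoc]
  have hLyap : ∀ s, HasDerivAt Qs (-Q s + B s * Qs s + Qs s * (B s)ᵀ) s :=
    hasDerivAt_mul_tailIntegral_mul_transpose (hU 0) hVW (by fun_prop) hint hrep
  have hpd : ∀ s, (Qs s).PosDef := fun s => hrep s ▸ posDef_mul_tailIntegral_mul_transpose hVW
    (fun ξ => posDef_of_coercive hη₀ (hQsym ξ) (hQell ξ)) (hint s)
  refine ⟨fun s => hasDerivAt_matrix_iff.mp (hLyap s), fun s x => ?_⟩
  exact hasDerivAt_half_quadForm_inv_of_lyapunov (hLyap s)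
    (by simpa using (hpd s).isHermitian.eq) (hpd s).isUnit x

/-- the Lyapunov equation for `Q_s` and the time derivative of
`Φ(s,x) = ½⟨Q_s⁻¹ x, x⟩`. -/
theorem statement1 (N : ℕ) (hN : 1 ≤ N)
    (Q B : ℝ → Matrix (Fin N) (Fin N) ℝ)
    (hQreg : ∀ i j, ContDiff ℝ 1 fun s => Q s i j)
    (hQbd : ∃ C : ℝ, ∀ (s : ℝ) (i j : Fin N),
      |Q s i j| ≤ C ∧ |deriv (fun t => Q t i j) s| ≤ C)
    (hBcont : ∀ i j, Continuous fun s => B s i j)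
    (hBbd : ∃ C : ℝ, ∀ (s : ℝ) (i j : Fin N), |B s i j| ≤ C)
    (hQsym : ∀ s, (Q s)ᵀ = Q s)
    (η₀ : ℝ) (hη₀ : 0 < η₀)
    (hQell : ∀ (s : ℝ) (ξ : Fin N → ℝ),
      η₀ * enorm2 ξ ^ 2 ≤ ∑ i, (Q s).mulVec ξ i * ξ i)
    (U : ℝ → ℝ → Matrix (Fin N) (Fin N) ℝ)
    (hU0 : ∀ r, U r r = 1)
    (hUderiv : ∀ (r s : ℝ) (i j : Fin N),
      HasDerivAt (fun t => U t r i j) ((B s * U s r) i j) s)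
    (C₀ ω : ℝ) (hC₀ : 0 < C₀) (hω : 0 < ω)
    (hdecay : ∀ r s : ℝ, r ≤ s → opNorm (U r s) ≤ C₀ * Real.exp (-ω * (s - r)))
    (Qs : ℝ → Matrix (Fin N) (Fin N) ℝ)
    (hQs : ∀ (s : ℝ) (i j : Fin N),
      Qs s i j = ∫ ξ in Set.Ioi s, (U s ξ * Q ξ * (U s ξ)ᵀ) i j)
    :
    (∀ (s : ℝ) (i j : Fin N),
      HasDerivAt (fun t => Qs t i j) ((-(Q s) + B s * Qs s + Qs s * (B s)ᵀ) i j) s) ∧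
    (∀ (s : ℝ) (x : Fin N → ℝ),
      HasDerivAt (fun t => (1 / 2) * ∑ i, (Qs t)⁻¹.mulVec x i * x i)
        ((1 / 2) * (∑ i, (Q s).mulVec ((Qs s)⁻¹.mulVec x) i * ((Qs s)⁻¹.mulVec x) i)
          - ∑ i, ((Qs s)⁻¹ * B s).mulVec x i * x i) s) :=
  statement1_general N Q B hQreg hQbd hBbd hQsym η₀ hη₀ hQell U hU0 hUderiv C₀ ω hω hdecay Qs hQs
end
end

section
/- Equip ℝ^{1+N} with the parabolic metric d((t,x),(s,y)) = max{|t − s|^{1/2}, |x − y|}, and for (s₀,x₀) ∈ ℝ^{1+N} and r > 0 let B_d((s₀,x₀), r) = (s₀ − r², s₀ + r²) × B(x₀, r) be the d-ball. Let ϱ : ℝ^{1+N} → (0, +∞) be bounded and Lipschitz continuous with respect to d with Lipschitz constant κ < 1, i.e. |ϱ(s,x) − ϱ(r,y)| ≤ κ d((s,x),(r,y)) for all points. Then there exists a sequence ((s_n, x_n)) in ℝ^{1+N} such that: (i) the balls B_d((s_n,x_n), ϱ(s_n,x_n)), n ∈ ℕ, cover ℝ^{1+N}; and (ii) for each λ ∈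 [1, κ^{-1}) there exists a natural number ζ(κ, λ, N) such that every subset I ⊆ ℕ with ⋂_{n ∈ I} B_d((s_n,x_n), λ ϱ(s_n,x_n)) ≠ ∅ contains at most ζ(κ, λ, N) elements. -/
/-!
Zorn's lemma gives a maximal set `C` of centres with `d(a, b) ≥ max (ϱ a) (ϱ b) / 2`. If some
point `q` were outside every `B_d(a, ϱ a)`, then `κ ≤ 1` would let `q` join `C`; so these
cylinders cover. The cylinders `B_d(a, ϱ a / 4)` are disjoint and open, hence `C` is countable,
and it is infinite since finitely many cylinders are bounded in time. If `q` lies in the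
`λ`-dilated cylinders of `a₁, …, a_k`, then `λκ < 1` makes every `ϱ aᵢ` comparable to `ϱ q`, so the
`aᵢ` are `ε`-separated inside a `d`-ball of radius `R` around `q` with `R / ε` depending only on
`κ` and `λ`. Since `|B_d(c, r)| = 2 r ^ (N + 2) |B(0, 1)|`, disjointness of the cylinders
`B_d(aᵢ, ε / 2)` bounds `k` by `((2R + ε) / ε) ^ (N + 2)`.
-/

noncomputable section
open MeasureTheory Real Set Filter ENNReal NNReal Matrix

/-- Points of `ℝ^{1+N}`, written as `(s, x)` with `s ∈ ℝ` (time) and `x ∈ ℝ^N` (space). -/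
abbrev Pt (N : ℕ) := ℝ × (Fin N → ℝ)

/-- The time derivative `D_s u`. -/
def pT {N : ℕ} (u : Pt N → ℝ) (q : Pt N) : ℝ := fderiv ℝ u q (1, 0)

/-- The spatial partial derivative `D_j u`. -/
def pX {N : ℕ} (j : Fin N) (u : Pt N → ℝ) (q : Pt N) : ℝ :=
  fderiv ℝ u q (0, Pi.single j 1)

/-- The spatial gradient `∇_x u`. -/
def gradX {N : ℕ} (u : Pt N → ℝ) (q : Pt N) : Fin N → ℝ := fun j => pX j u q

/-- The spatial Laplacian `Δu = D_1² u + … + D_N² u`. -/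
def lapX {N : ℕ} (u : Pt N → ℝ) (q : Pt N) : ℝ := ∑ j, pX j (pX j u) q

/-- The spatial divergence `div_x F` of a (spatially differentiable) vector field,
computed via spatial Fréchet derivatives. -/
def divXs {N : ℕ} (F : Pt N → Fin N → ℝ) (q : Pt N) : ℝ :=
  ∑ j, fderiv ℝ (fun x => F (q.1, x) j) q.2 (Pi.single j 1)

/-- The second-order term in divergence form, `div_x (a ∇_x u)`. -/
def divAGrad {N : ℕ} (a : Pt N → Matrix (Fin N) (Fin N) ℝ) (u : Pt N → ℝ)
    (q : Pt N) : ℝ :=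
  ∑ i, pX i (fun r => ∑ j, a r i j * pX j u r) q

/-- The parabolic distance `d((t,x),(s,y)) = max{|t−s|^{1/2}, |x−y|}` on `ℝ^{1+N}`. -/
def pdist {N : ℕ} (q r : Pt N) : ℝ :=
  max (Real.sqrt |q.1 - r.1|) (enorm2 (q.2 - r.2))

/-- The ball `B_d(c, r) = (c₁ − r², c₁ + r²) × B(c₂, r)` of the parabolic metric
(a parabolic cylinder). -/
def pball {N : ℕ} (c : Pt N) (r : ℝ) : Set (Pt N) :=
  {q : Pt N | c.1 - r ^ 2 < q.1 ∧ q.1 < c.1 + r ^ 2 ∧ enorm2 (q.2 - c.2) < r}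

theorem Real.sqrt_add_le_add_sqrt {x y : ℝ} (hx : 0 ≤ x) (hy : 0 ≤ y) : √(x + y) ≤ √x + √y := by
  rw [Real.sqrt_le_left (by positivity)]
  nlinarith [Real.sq_sqrt hx, Real.sq_sqrt hy, Real.sqrt_nonneg x, Real.sqrt_nonneg y]

theorem exists_maximal_pairwise {α : Type*} (r : α → α → Prop) :
    ∃ C : Set α, Maximal (fun s => s.Pairwise r) C :=
  zorn_subset _ fun c hcS hc => ⟨⋃₀ c, hc.pairwise_sUnion.2 hcS, fun _ => subset_sUnion_of_mem⟩

theorem Set.Countable.exists_injective_range_eq {α : Type*} {C : Set α} (hc : C.Countable)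
    (hi : C.Infinite) : ∃ c : ℕ → α, Function.Injective c ∧ range c = C := by
  have := hc.to_subtype
  have := hi.to_subtype
  obtain ⟨e⟩ : Nonempty (ℕ ≃ C) := nonempty_equiv_of_countable
  exact ⟨(↑) ∘ e, Subtype.coe_injective.comp e.injective, by
    rw [range_comp, e.range_eq_univ, image_univ, Subtype.range_coe]⟩

section ParabolicMetric

variable {N : ℕ}

theorem enorm2_eq_norm (x : Fin N → ℝ) : enorm2 x = ‖WithLp.toLp 2 x‖ := by
  simp [enorm2, EuclideanSpace.norm_eq]

theorem pdist_nonneg (q r : Pt N) : 0 ≤ pdist q r :=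
  (Real.sqrt_nonneg _).trans (le_max_left _ _)

theorem pdist_self (q : Pt N) : pdist q q = 0 := by
  simp [pdist, enorm2]

theorem pdist_comm (q r : Pt N) : pdist q r = pdist r q := by
  simp only [pdist, abs_sub_comm q.1, enorm2_eq_norm, WithLp.toLp_sub, norm_sub_rev]

theorem pdist_triangle (a b c : Pt N) : pdist a c ≤ pdist a b + pdist b c := by
  refine max_le ?_ ?_
  · calc √|a.1 - c.1| ≤ √(|a.1 - b.1| + |b.1 - c.1|) := Real.sqrt_le_sqrt (abs_sub_le _ _ _)
      _ ≤ √|a.1 - b.1| + √|b.1 - c.1| :=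
        Real.sqrt_add_le_add_sqrt (abs_nonneg _) (abs_nonneg _)
      _ ≤ pdist a b + pdist b c := add_le_add (le_max_left _ _) (le_max_left _ _)
  · calc enorm2 (a.2 - c.2) ≤ enorm2 (a.2 - b.2) + enorm2 (b.2 - c.2) := by
          simpa only [enorm2_eq_norm, WithLp.toLp_sub] using norm_sub_le_norm_sub_add_norm_sub _ _ _
      _ ≤ pdist a b + pdist b c := add_le_add (le_max_right _ _) (le_max_right _ _)

theorem mem_pball_iff {c q : Pt N} {r : ℝ} : q ∈ pball c r ↔ pdist q c < r := by
  simp only [pball, Set.mem_ofPred_eq, pdist, max_lt_iff]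
  constructor
  · rintro ⟨h₁, h₂, h₃⟩
    have hr : 0 < r := (enorm2_eq_norm _ ▸ norm_nonneg _).trans_lt h₃
    exact ⟨(Real.sqrt_lt' hr).2 (abs_sub_lt_iff.2 ⟨by linarith, by linarith⟩), h₃⟩
  · rintro ⟨h₁, h₂⟩
    have hr : 0 < r := (enorm2_eq_norm _ ▸ norm_nonneg _).trans_lt h₂
    obtain ⟨h₃, h₄⟩ := abs_sub_lt_iff.1 ((Real.sqrt_lt' hr).1 h₁)
    exact ⟨by linarith, by linarith, h₂⟩

theorem disjoint_pball_of_add_le_pdist {a b : Pt N} {r s : ℝ} (h : r + s ≤ pdist a b) :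
    Disjoint (pball a r) (pball b s) := by
  refine Set.disjoint_left.2 fun y hya hyb => ?_
  have := pdist_triangle a y b
  rw [pdist_comm a y] at this
  linarith [mem_pball_iff.1 hya, mem_pball_iff.1 hyb]

theorem pball_eq_prod (c : Pt N) (r : ℝ) :
    pball c r = Ioo (c.1 - r ^ 2) (c.1 + r ^ 2) ×ˢ
      (WithLp.toLp 2 ⁻¹' Metric.ball (WithLp.toLp 2 c.2 : EuclideanSpace ℝ (Fin N)) r) := by
  ext q
  simp [pball, enorm2_eq_norm, dist_eq_norm, and_assoc]

theorem isOpen_pball (c : Pt N) (r : ℝ) : IsOpen (pball c r) := by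
  rw [pball_eq_prod]
  exact isOpen_Ioo.prod (Metric.isOpen_ball.preimage (PiLp.continuous_toLp 2 _))

theorem volume_pball (c : Pt N) {r : ℝ} (hr : 0 < r) :
    volume (pball c r) =
      ENNReal.ofReal (2 * r ^ (N + 2)) * volume (Metric.ball (0 : EuclideanSpace ℝ (Fin N)) 1) := by
  rw [pball_eq_prod, Measure.volume_eq_prod, Measure.prod_prod, Real.volume_Ioo,
    (PiLp.volume_preserving_toLp (Fin N)).measure_preimage measurableSet_ball.nullMeasurableSet,
    Measure.addHaar_ball_of_pos _ _ hr, finrank_euclideanSpace_fin, ← mul_assoc,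
    show c.1 + r ^ 2 - (c.1 - r ^ 2) = 2 * r ^ 2 by ring, ← ENNReal.ofReal_mul (by positivity)]
  ring_nf

end ParabolicMetric

section Packing

variable {N : ℕ} {q : Pt N} {ε R : ℝ}

theorem card_mul_pow_le_of_pairwise_le_pdist (s : Finset (Pt N)) (hε : 0 < ε) (hR : 0 ≤ R)
    (hsep : (s : Set (Pt N)).Pairwise fun a b => ε ≤ pdist a b) (hbd : ∀ a ∈ s, pdist a q ≤ R) :
    (s.card : ℝ) * (ε / 2) ^ (N + 2) ≤ (R + ε / 2) ^ (N + 2) := by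
  have hdisj : (s : Set (Pt N)).PairwiseDisjoint fun a => pball a (ε / 2) :=
    hsep.mono' fun a b hab => disjoint_pball_of_add_le_pdist (by linarith)
  have hvol : ∑ a ∈ s, volume (pball a (ε / 2)) ≤ volume (pball q (R + ε / 2)) := by
    rw [← measure_biUnion_finset hdisj fun a _ => (isOpen_pball a _).measurableSet]
    refine measure_mono (iUnion₂_subset fun a ha y hy => mem_pball_iff.2 ?_)
    linarith [pdist_triangle y a q, mem_pball_iff.1 hy, hbd a ha]
  have hV : volume (Metric.ball (0 : EuclideanSpace ℝ (Fin N)) 1) ≠ 0 :=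
    (Metric.measure_ball_pos _ _ one_pos).ne'
  simp only [volume_pball _ (half_pos hε), volume_pball _ (by positivity : 0 < R + ε / 2),
    Finset.sum_const, nsmul_eq_mul] at hvol
  rw [← mul_assoc, ENNReal.mul_le_mul_iff_left hV measure_ball_lt_top.ne,
    ← ENNReal.ofReal_natCast, ← ENNReal.ofReal_mul (by positivity),
    ENNReal.ofReal_le_ofReal_iff (by positivity)] at hvol
  linarith

theorem encard_le_of_pairwise_le_pdist {T : Set (Pt N)} (hε : 0 < ε) (hR : 0 ≤ R)
    (hsep : T.Pairwise fun a b => ε ≤ pdist a b) (hbd : ∀ a ∈ T, pdist a q ≤ R) {m : ℕ}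
    (hm : ((2 * R + ε) / ε) ^ (N + 2) ≤ m) : T.encard ≤ m := by
  by_contra! hlt
  obtain ⟨s, hsT, hs⟩ := Set.exists_subset_encard_eq (Order.add_one_le_of_lt hlt)
  lift s to Finset (Pt N) using Set.finite_of_encard_eq_coe (k := m + 1) (mod_cast hs)
  have hcard : s.card = m + 1 := by
    rw [Set.encard_coe_eq_coe_finsetCard] at hs
    exact_mod_cast hs
  have hpack := card_mul_pow_le_of_pairwise_le_pdist s hε hR (hsep.mono hsT) fun a ha => hbd a (hsT ha)
  have hratio : (2 * R + ε) / ε = (R + ε / 2) / (ε / 2) := by field_simp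
  rw [hratio, div_pow, div_le_iff₀ (by positivity)] at hm
  rw [hcard, Nat.cast_succ] at hpack
  nlinarith [pow_pos (half_pos hε) (N + 2)]

end Packing

/-- The overlap number `ζ(κ, λ, N)`: the packing bound `((2R + ε) / ε) ^ (N + 2)` for
`R = λ ϱ(q) / (1 - λκ)` and `ε = ϱ(q) / (2 (1 + λκ))`, where the ratio no longer depends on `q`. -/
def overlapBound (N : ℕ) (κ lam : ℝ) : ℕ :=
  ⌈(4 * lam * (1 + lam * κ) / (1 - lam * κ) + 1) ^ (N + 2)⌉₊

def RadiusSeparated {N : ℕ} (ϱ : Pt N → ℝ) (a b : Pt N) : Prop :=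
  max (ϱ a) (ϱ b) / 2 ≤ pdist a b

section Separated

variable {N : ℕ} {ϱ : Pt N → ℝ} {κ : ℝ} {C : Set (Pt N)}

theorem exists_pdist_lt_of_maximal (hpos : ∀ q, 0 < ϱ q) (hκ : κ ≤ 1)
    (hLip : ∀ q r, |ϱ q - ϱ r| ≤ κ * pdist q r)
    (hC : Maximal (fun s => s.Pairwise (RadiusSeparated ϱ)) C) (q : Pt N) :
    ∃ a ∈ C, pdist q a < ϱ a := by
  by_contra! hfar
  have hsep : ∀ a ∈ C, q ≠ a → RadiusSeparated ϱ q a ∧ RadiusSeparated ϱ a q := by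
    intro a ha _
    have hqa : RadiusSeparated ϱ q a := by
      have hlip := (le_abs_self _).trans (hLip q a)
      have hfar_a := hfar a ha
      have hd := pdist_nonneg q a
      rw [RadiusSeparated, div_le_iff₀ two_pos]
      exact max_le (by nlinarith) (by linarith)
    exact ⟨hqa, by rwa [RadiusSeparated, max_comm, pdist_comm]⟩
  have hqC : q ∈ C := hC.mem_of_prop_insert (hC.prop.insert hsep)
  linarith [hfar q hqC, pdist_self q, hpos q]

theorem Set.Pairwise.countable_of_radiusSeparated (hpos : ∀ q, 0 < ϱ q)
    (hC : C.Pairwise (RadiusSeparated ϱ)) : C.Countable := by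
  refine Set.PairwiseDisjoint.countable_of_isOpen (s := fun a => pball a (ϱ a / 4)) ?_
    (fun a _ => isOpen_pball _ _) fun a _ => ⟨a, mem_pball_iff.2 ?_⟩
  · refine hC.mono' fun a b hab => disjoint_pball_of_add_le_pdist ?_
    have hab : max (ϱ a) (ϱ b) / 2 ≤ pdist a b := hab
    linarith [le_max_left (ϱ a) (ϱ b), le_max_right (ϱ a) (ϱ b)]
  · linarith [pdist_self a, hpos a]

theorem infinite_of_forall_exists_pdist_lt (hcov : ∀ q : Pt N, ∃ a ∈ C, pdist q a < ϱ a) :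
    C.Infinite := by
  intro hfin
  obtain ⟨T, hT⟩ := (hfin.image fun a => a.1 + ϱ a ^ 2).bddAbove
  obtain ⟨a, ha, hqa⟩ := hcov (T, 0)
  exact (mem_pball_iff.2 hqa).2.1.not_ge (hT (mem_image_of_mem _ ha))

theorem radius_bounds_of_pdist_lt (hκ : 0 ≤ κ) (hLip : ∀ q r, |ϱ q - ϱ r| ≤ κ * pdist q r)
    {lam : ℝ} {q a : Pt N} (h : pdist q a < lam * ϱ a) :
    (1 - lam * κ) * ϱ a ≤ ϱ q ∧ ϱ q ≤ (1 + lam * κ) * ϱ a := by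
  have hκd := mul_le_mul_of_nonneg_left h.le hκ
  obtain ⟨h₁, h₂⟩ := abs_le.1 (hLip q a)
  constructor <;> linarith

theorem Set.Pairwise.encard_setOf_pdist_lt_le (hpos : ∀ q, 0 < ϱ q) (hκ : 0 ≤ κ)
    (hLip : ∀ q r, |ϱ q - ϱ r| ≤ κ * pdist q r) (hC : C.Pairwise (RadiusSeparated ϱ))
    {lam : ℝ} (hlam : 0 ≤ lam) (hlamκ : lam * κ < 1) (q : Pt N) :
    {a ∈ C | pdist q a < lam * ϱ a}.encard ≤ overlapBound N κ lam := by
  have hρ := hpos q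
  have hplus : 0 < 1 + lam * κ := by nlinarith
  have hminus : 0 < 1 - lam * κ := by linarith
  refine encard_le_of_pairwise_le_pdist (q := q) (ε := ϱ q / (2 * (1 + lam * κ)))
    (R := lam * ϱ q / (1 - lam * κ)) (by positivity) (by positivity) ?_ ?_ ?_
  · rintro a ⟨ha, hqa⟩ b ⟨hb, -⟩ hab
    have hsep : max (ϱ a) (ϱ b) / 2 ≤ pdist a b := hC ha hb hab
    have hlow := (radius_bounds_of_pdist_lt hκ hLip hqa).2
    have ha2 : ϱ a ≤ 2 * pdist a b := by linarith [le_max_left (ϱ a) (ϱ b)]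
    rw [div_le_iff₀ (by positivity)]
    nlinarith [mul_le_mul_of_nonneg_left ha2 hplus.le]
  · rintro a ⟨-, hqa⟩
    have hup := (radius_bounds_of_pdist_lt hκ hLip hqa).1
    rw [pdist_comm, le_div_iff₀ hminus]
    nlinarith
  · have hratio : (2 * (lam * ϱ q / (1 - lam * κ)) + ϱ q / (2 * (1 + lam * κ))) /
        (ϱ q / (2 * (1 + lam * κ))) = 4 * lam * (1 + lam * κ) / (1 - lam * κ) + 1 := by
      field_simp
      ring
    rw [hratio]
    exact Nat.le_ceil _

end Separated

theorem statement19_general (N : ℕ)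
    (ϱ : Pt N → ℝ) (hϱpos : ∀ q, 0 < ϱ q)
    (κ : ℝ) (hκ0 : 0 ≤ κ) (hκ1 : κ < 1)
    (hLip : ∀ q r : Pt N, |ϱ q - ϱ r| ≤ κ * pdist q r) :
    ∃ c : ℕ → Pt N,
      (∀ q : Pt N, ∃ n : ℕ, q ∈ pball (c n) (ϱ (c n))) ∧
      ∀ lam : ℝ, 1 ≤ lam → lam * κ < 1 →
        ∃ ζ : ℕ, ∀ I : Set ℕ,
          (⋂ n ∈ I, pball (c n) (lam * ϱ (c n))).Nonempty → I.encard ≤ ζ := by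
  obtain ⟨C, hC⟩ := exists_maximal_pairwise (RadiusSeparated ϱ)
  have hcov := exists_pdist_lt_of_maximal hϱpos hκ1.le hLip hC
  obtain ⟨c, hc_inj, rfl⟩ := (hC.prop.countable_of_radiusSeparated hϱpos).exists_injective_range_eq
    (infinite_of_forall_exists_pdist_lt hcov)
  refine ⟨c, fun q => ?_, fun lam hlam hlamκ => ⟨overlapBound N κ lam, fun I ⟨q, hq⟩ => ?_⟩⟩
  · obtain ⟨_, ⟨n, rfl⟩, hn⟩ := hcov q
    exact ⟨n, mem_pball_iff.2 hn⟩
  · have hI : c '' I ⊆ {a ∈ range c | pdist q a < lam * ϱ a} := by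
      rintro _ ⟨n, hn, rfl⟩
      exact ⟨mem_range_self n, mem_pball_iff.1 (mem_iInter₂.1 hq n hn)⟩
    calc I.encard = (c '' I).encard := (hc_inj.injOn.encard_image).symm
      _ ≤ _ := encard_le_encard hI
      _ ≤ _ := hC.prop.encard_setOf_pdist_lt_le hϱpos hκ0 hLip (by linarith) hlamκ q

/-- a parabolic variant of the Besicovitch covering theorem: if
`ϱ : ℝ^{1+N} → (0,∞)` is bounded and `κ`-Lipschitz for the parabolic metric with
`κ < 1`, then there is a sequence of centers `(s_n, x_n)` such that the cylinders
`B_d((s_n,x_n), ϱ(s_n,x_n))` cover `ℝ^{1+N}` and, for every `λ ∈ [1, κ⁻¹)`, there is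
`ζ(κ,λ,N) ∈ ℕ` such that any set of indices whose dilated cylinders
`B_d((s_n,x_n), λϱ(s_n,x_n))` have a common point has at most `ζ(κ,λ,N)` elements. -/
theorem statement19 (N : ℕ) (hN : 1 ≤ N)
    (ϱ : Pt N → ℝ) (hϱpos : ∀ q, 0 < ϱ q)
    (hϱbdd : ∃ Mb : ℝ, ∀ q, ϱ q ≤ Mb)
    (κ : ℝ) (hκ0 : 0 ≤ κ) (hκ1 : κ < 1)
    (hLip : ∀ q r : Pt N, |ϱ q - ϱ r| ≤ κ * pdist q r) :
    ∃ c : ℕ → Pt N,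
      (∀ q : Pt N, ∃ n : ℕ, q ∈ pball (c n) (ϱ (c n))) ∧
      ∀ lam : ℝ, 1 ≤ lam → lam * κ < 1 →
        ∃ ζ : ℕ, ∀ I : Set ℕ,
          (⋂ n ∈ I, pball (c n) (lam * ϱ (c n))).Nonempty → I.encard ≤ ζ :=
  statement19_general N ϱ hϱpos κ hκ0 hκ1 hLip
end
end
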